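/- Let all preferences in P be substitutable and satisfy the law of aggregate demand, and let μ and μ̃ be stable matchings with μ ⪰_F μ̃. Then μ is the firm-optimal stable matching and μ̃ is the worker-optimal stable matching under the reduced preference profile P^{μ,μ̃}; furthermore, μ̃ is the firm-pessimal and μ the worker-pessimal stable matching under P^{μ,μ̃}. That is, for every μ' ∈ S(P^{μ,μ̃}) it holds that μ ⪰'_F μ' ⪰'_F μ̃ and μ̃ ⪰'_W μ' ⪰'_W μ, where ⪰'_F and ⪰'_W denote the unanimous Blair orders computed with the reduced choice sets C^{μ,μ̃}. -/
import Mathlib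


open Finset

noncomputable section

open scoped Classical

/-- `C` is a choice function: `C S ⊆ S` for every `S`. -/
def IsChoiceFun {α : Type*} (C : Finset α → Finset α) : Prop := ∀ S, C S ⊆ S

/-- Substitutability of a choice function: if `b` is chosen from `S`, then `b` is chosen
from `S' ∪ {b}` for every `S' ⊆ S`. -/
def Substitutable {α : Type*} [DecidableEq α] (C : Finset α → Finset α) : Prop :=
  ∀ (S S' : Finset α) (b : α), S' ⊆ S → b ∈ C S → b ∈ C (insert b S')

/-- The law of aggregate demand for a choice function. -/
def LAD {α : Type*} (C : Finset α → Finset α) : Prop :=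
  ∀ S' S : Finset α, S' ⊆ S → (C S').card ≤ (C S).card

/-- The most `u`-preferred subset of `S` among the members of the family `A` of acceptable
sets (the empty set is always available as a fallback). -/
def bestIn {α : Type*} (u : Finset α → ℕ) (A : Set (Finset α)) (S : Finset α) : Finset α := by
  classical
  have h : ∃ T ∈ (S.powerset).filter (fun T => T ∈ A ∨ T = ∅),
      ∀ T' ∈ (S.powerset).filter (fun T => T ∈ A ∨ T = ∅), u T' ≤ u T :=
    Finset.exists_max_image _ u ⟨∅, by simp⟩
  exact h.choose

set_option linter.unusedSectionVars false

section BestInLemmas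

variable {α : Type*} (u : Finset α → ℕ) (A : Set (Finset α))

lemma bestIn_spec (S : Finset α) :
    bestIn u A S ∈ (S.powerset).filter (fun T => T ∈ A ∨ T = ∅) ∧
    ∀ T' ∈ (S.powerset).filter (fun T => T ∈ A ∨ T = ∅), u T' ≤ u (bestIn u A S) := by
  unfold bestIn
  exact (Finset.exists_max_image _ u ⟨∅, by simp⟩).choose_spec

lemma bestIn_subset (S : Finset α) : bestIn u A S ⊆ S := by
  have h := (bestIn_spec u A S).1
  simp only [mem_filter, mem_powerset] at h
  exact h.1

lemma bestIn_cand (S : Finset α) : bestIn u A S ∈ A ∨ bestIn u A S = ∅ := by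
  have h := (bestIn_spec u A S).1
  simp only [mem_filter, mem_powerset] at h
  exact h.2

lemma bestIn_le {S T : Finset α} (hTS : T ⊆ S) (hT : T ∈ A ∨ T = ∅) :
    u T ≤ u (bestIn u A S) :=
  (bestIn_spec u A S).2 T (by simp only [mem_filter, mem_powerset]; exact ⟨hTS, hT⟩)

lemma bestIn_eq_of (hinj : Function.Injective u) {S T : Finset α} (hTS : T ⊆ S)
    (hT : T ∈ A ∨ T = ∅) (hmax : ∀ T', T' ⊆ S → (T' ∈ A ∨ T' = ∅) → u T' ≤ u T) :
    bestIn u A S = T :=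
  hinj (le_antisymm (hmax _ (bestIn_subset u A S) (bestIn_cand u A S)) (bestIn_le u A hTS hT))

lemma bestIn_warp (hinj : Function.Injective u) {S T : Finset α}
    (h1 : bestIn u A S ⊆ T) (h2 : T ⊆ S) : bestIn u A T = bestIn u A S :=
  bestIn_eq_of u A hinj h1 (bestIn_cand u A S)
    (fun _ hT' hc => bestIn_le u A (hT'.trans h2) hc)

end BestInLemmas

/-- A many-to-many matching market: each firm `f` has a strict preference over subsets
of workers, represented by an injective utility `uF f`, and symmetrically for workers. -/
structure Market (F W : Type*) where
  uF : F → Finset W → ℕ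
  uW : W → Finset F → ℕ
  injF : ∀ f, Function.Injective (uF f)
  injW : ∀ w, Function.Injective (uW w)

/-- A many-to-many matching. -/
structure Matching (F W : Type*) where
  fm : F → Finset W
  wm : W → Finset F
  consistent : ∀ f w, w ∈ fm f ↔ f ∈ wm w

namespace Market

variable {F W : Type*} [DecidableEq F] [DecidableEq W]

/-- The choice set of firm `f` under the original preference: the most preferred
subset among the acceptable subsets (those strictly preferred to `∅`). -/
def Cf (M : Market F W) (f : F) : Finset W → Finset W :=
  bestIn (M.uF f) {T | M.uF f ∅ < M.uF f T}

/-- The choice set of worker `w` under the original preference. -/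
def Cw (M : Market F W) (w : W) : Finset F → Finset F :=
  bestIn (M.uW w) {T | M.uW w ∅ < M.uW w T}

/-- Individual rationality under the original profile. -/
def IR (M : Market F W) (μ : Matching F W) : Prop :=
  (∀ f, M.Cf f (μ.fm f) = μ.fm f) ∧ (∀ w, M.Cw w (μ.wm w) = μ.wm w)

/-- `(f,w)` blocks `μ` under the original profile. -/
def Blocks (M : Market F W) (μ : Matching F W) (f : F) (w : W) : Prop :=
  w ∉ μ.fm f ∧ w ∈ M.Cf f (insert w (μ.fm f)) ∧ f ∈ M.Cw w (insert f (μ.wm w))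

/-- Stability under the original profile. -/
def Stable (M : Market F W) (μ : Matching F W) : Prop :=
  M.IR μ ∧ ∀ f w, ¬ M.Blocks μ f w

/-- Blair's partial order for firm `f`: `S ⪰_f S'` iff `C_f (S ∪ S') = S`. -/
def blairF (M : Market F W) (f : F) (S S' : Finset W) : Prop := M.Cf f (S ∪ S') = S

/-- Blair's partial order for worker `w`. -/
def blairW (M : Market F W) (w : W) (S S' : Finset F) : Prop := M.Cw w (S ∪ S') = S

/-- The unanimous Blair order for the firms' side: `μ ⪰_F μ'`. -/
def geF (M : Market F W) (μ μ' : Matching F W) : Prop := ∀ f, M.blairF f (μ.fm f) (μ'.fm f)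

/-- The unanimous Blair order for the workers' side: `μ ⪰_W μ'`. -/
def geW (M : Market F W) (μ μ' : Matching F W) : Prop := ∀ w, M.blairW w (μ.wm w) (μ'.wm w)

/-- Strict unanimous Blair order for the firms' side: `μ ≻_F μ'`. -/
def gtF (M : Market F W) (μ μ' : Matching F W) : Prop := M.geF μ μ' ∧ μ ≠ μ'

/-- Workers deleted from `f`'s list in Step 1(a) of the reduction procedure:
those belonging to some `W' ≻_f μ(f)` but not to `μ(f)`. -/
def D1 (M : Market F W) (μ : Matching F W) (f : F) : Set W :=
  {x | ∃ W' : Finset W, (M.Cf f (W' ∪ μ.fm f) = W' ∧ W' ≠ μ.fm f) ∧ x ∈ W' ∧ x ∉ μ.fm f}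

/-- Workers deleted from `f`'s list in Step 2(a): those belonging to some `W'` with
`μ̃(f) ≻_f W'` but not to `μ̃(f)`. -/
def D2 (M : Market F W) (μt : Matching F W) (f : F) : Set W :=
  {x | ∃ W' : Finset W, (M.Cf f (μt.fm f ∪ W') = μt.fm f ∧ μt.fm f ≠ W') ∧ x ∈ W' ∧ x ∉ μt.fm f}

/-- Firms deleted from `w`'s list in Step 1(b). -/
def E1 (M : Market F W) (μt : Matching F W) (w : W) : Set F :=
  {x | ∃ F' : Finset F, (M.Cw w (F' ∪ μt.wm w) = F' ∧ F' ≠ μt.wm w) ∧ x ∈ F' ∧ x ∉ μt.wm w}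

/-- Firms deleted from `w`'s list in Step 2(b). -/
def E2 (M : Market F W) (μ : Matching F W) (w : W) : Set F :=
  {x | ∃ F' : Finset F, (M.Cw w (μ.wm w ∪ F') = μ.wm w ∧ μ.wm w ≠ F') ∧ x ∈ F' ∧ x ∉ μ.wm w}

/-- Workers deleted from `f`'s list in Step 3: those workers `w` for which `{f}` is no
longer on `w`'s list after Steps 1 and 2 (either `{f}` was never acceptable to `w`, or
`f` was deleted from `w`'s list in Step 1(b) or 2(b)). -/
def D3 (M : Market F W) (μ μt : Matching F W) (f : F) : Set W :=
  {w | ¬ (M.uW w ∅ < M.uW w {f}) ∨ f ∈ M.E1 μt w ∪ M.E2 μ w}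

/-- Firms deleted from `w`'s list in Step 3. -/
def E3 (M : Market F W) (μ μt : Matching F W) (w : W) : Set F :=
  {f | ¬ (M.uF f ∅ < M.uF f {w}) ∨ w ∈ M.D1 μ f ∪ M.D2 μt f}

/-- All workers deleted from `f`'s list in the reduction procedure. -/
def Dall (M : Market F W) (μ μt : Matching F W) (f : F) : Set W :=
  M.D1 μ f ∪ M.D2 μt f ∪ M.D3 μ μt f

/-- All firms deleted from `w`'s list in the reduction procedure. -/
def Eall (M : Market F W) (μ μt : Matching F W) (w : W) : Set F :=
  M.E1 μt w ∪ M.E2 μ w ∪ M.E3 μ μt w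

/-- The family of sets surviving in `f`'s list under the reduced profile `P^{μ,μ̃}`:
originally acceptable sets containing no deleted worker. -/
def RAf (M : Market F W) (μ μt : Matching F W) (f : F) : Set (Finset W) :=
  {T | M.uF f ∅ < M.uF f T ∧ ∀ x ∈ T, x ∉ M.Dall μ μt f}

/-- The family of sets surviving in `w`'s list under the reduced profile `P^{μ,μ̃}`. -/
def RAw (M : Market F W) (μ μt : Matching F W) (w : W) : Set (Finset F) :=
  {T | M.uW w ∅ < M.uW w T ∧ ∀ x ∈ T, x ∉ M.Eall μ μt w}

/-- The choice set `C^{μ,μ̃}_f` of firm `f` under the reduced profile. -/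
def Cfred (M : Market F W) (μ μt : Matching F W) (f : F) : Finset W → Finset W :=
  bestIn (M.uF f) (M.RAf μ μt f)

/-- The choice set `C^{μ,μ̃}_w` of worker `w` under the reduced profile. -/
def Cwred (M : Market F W) (μ μt : Matching F W) (w : W) : Finset F → Finset F :=
  bestIn (M.uW w) (M.RAw μ μt w)

/-- Individual rationality under the reduced profile `P^{μ,μ̃}`. -/
def IRred (M : Market F W) (μ μt ν : Matching F W) : Prop :=
  (∀ f, M.Cfred μ μt f (ν.fm f) = ν.fm f) ∧ (∀ w, M.Cwred μ μt w (ν.wm w) = ν.wm w)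

/-- Blocking under the reduced profile `P^{μ,μ̃}`. -/
def Blocksred (M : Market F W) (μ μt ν : Matching F W) (f : F) (w : W) : Prop :=
  w ∉ ν.fm f ∧ w ∈ M.Cfred μ μt f (insert w (ν.fm f)) ∧
    f ∈ M.Cwred μ μt w (insert f (ν.wm w))

/-- Stability under the reduced profile `P^{μ,μ̃}`. -/
def Stablered (M : Market F W) (μ μt ν : Matching F W) : Prop :=
  M.IRred μ μt ν ∧ ∀ f w, ¬ M.Blocksred μ μt ν f w

/-- The unanimous Blair order on the firms' side computed with the reduced choice sets. -/
def geFred (M : Market F W) (μ μt ν ν' : Matching F W) : Prop :=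
  ∀ f, M.Cfred μ μt f (ν.fm f ∪ ν'.fm f) = ν.fm f

/-- The unanimous Blair order on the workers' side computed with the reduced choice sets. -/
def geWred (M : Market F W) (μ μt ν ν' : Matching F W) : Prop :=
  ∀ w, M.Cwred μ μt w (ν.wm w ∪ ν'.wm w) = ν.wm w

/-- All preferences in the market are substitutable. -/
def SubstAll (M : Market F W) : Prop :=
  (∀ f, Substitutable (M.Cf f)) ∧ (∀ w, Substitutable (M.Cw w))

/-- All preferences in the market satisfy the law of aggregate demand. -/
def LADAll (M : Market F W) : Prop :=
  (∀ f, LAD (M.Cf f)) ∧ (∀ w, LAD (M.Cw w))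

/-- A cycle for the reduced profile `P^{μ,μ̃}`: an `r`-periodic sequence of worker-firm
pairs `(w_i, f_i)` (indexed cyclically) such that (i) `w_i ∈ μ(f_i) \ μ̃(f_i)`;
(ii) `C^{μ,μ̃}_{f_i}(W \ {w_i}) = (μ(f_i) \ {w_i}) ∪ {w_{i+1}}`; and (iii)
`C^{μ,μ̃}_{w_{i+1}}(μ(w_{i+1}) ∪ {f_i}) = (μ(w_{i+1}) \ {f_{i+1}}) ∪ {f_i}`. -/
def IsCycle [Fintype W] (M : Market F W) (μ μt : Matching F W) (r : ℕ)
    (w : ℕ → W) (f : ℕ → F) : Prop :=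
  0 < r ∧ (∀ i, w (i + r) = w i) ∧ (∀ i, f (i + r) = f i) ∧
  ∀ i, (w i ∈ μ.fm (f i) ∧ w i ∉ μt.fm (f i)) ∧
    M.Cfred μ μt (f i) (Finset.univ \ {w i}) = insert (w (i + 1)) (μ.fm (f i) \ {w i}) ∧
    M.Cwred μ μt (w (i + 1)) (μ.wm (w (i + 1)) ∪ {f i}) =
      insert (f i) (μ.wm (w (i + 1)) \ {f (i + 1)})

/-- The firm-side assignment of the cyclic matching `μ_σ` obtained from the cycle
`σ = (w, f)` of length `r`. -/
def cyclicFm (μ : Matching F W) (r : ℕ) (w : ℕ → W) (f : ℕ → F) (g : F) : Finset W :=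
  if ∃ i ∈ Finset.range r, f i = g then
    (μ.fm g \ ((Finset.range r).filter (fun i => f i = g)).image w) ∪
      ((Finset.range r).filter (fun i => f i = g)).image (fun i => w (i + 1))
  else μ.fm g

/-- `ν` is a cyclic matching under the reduced profile `P^{μ,μ̃}`: `ν = μ_σ` for some
cycle `σ` for `P^{μ,μ̃}` (the worker side of `ν` is determined by consistency). -/
def IsCyclicMatching [Fintype W] (M : Market F W) (μ μt ν : Matching F W) : Prop :=
  ∃ (r : ℕ) (w : ℕ → W) (f : ℕ → F),
    M.IsCycle μ μt r w f ∧ ∀ g, ν.fm g = cyclicFm μ r w f g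

end Market

namespace Market

variable {F W : Type*} [DecidableEq F] [DecidableEq W] (M : Market F W)

/-! ### Basic properties of the choice functions -/

lemma Cf_subset (f : F) (S : Finset W) : M.Cf f S ⊆ S := bestIn_subset _ _ _

lemma Cw_subset (w : W) (S : Finset F) : M.Cw w S ⊆ S := bestIn_subset _ _ _

lemma Cf_cand (f : F) (S : Finset W) :
    M.uF f ∅ < M.uF f (M.Cf f S) ∨ M.Cf f S = ∅ :=
  bestIn_cand (M.uF f) {T | M.uF f ∅ < M.uF f T} S

lemma Cw_cand (w : W) (S : Finset F) :
    M.uW w ∅ < M.uW w (M.Cw w S) ∨ M.Cw w S = ∅ :=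
  bestIn_cand (M.uW w) {T | M.uW w ∅ < M.uW w T} S

lemma Cf_warp {f : F} {S T : Finset W} (h1 : M.Cf f S ⊆ T) (h2 : T ⊆ S) :
    M.Cf f T = M.Cf f S := bestIn_warp _ _ (M.injF f) h1 h2

lemma Cw_warp {w : W} {S T : Finset F} (h1 : M.Cw w S ⊆ T) (h2 : T ⊆ S) :
    M.Cw w T = M.Cw w S := bestIn_warp _ _ (M.injW w) h1 h2

/-- Rejected workers stay rejected when the menu grows (from substitutability). -/
lemma Cf_reject {f : F} (hs : Substitutable (M.Cf f)) {S T : Finset W} (hTS : T ⊆ S)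
    {y : W} (hy : y ∈ T) (hyr : y ∉ M.Cf f T) : y ∉ M.Cf f S := by
  intro h
  have h2 := hs S (T.erase y) y ((erase_subset _ _).trans hTS) h
  rw [insert_erase hy] at h2
  exact hyr h2

lemma Cw_reject {w : W} (hs : Substitutable (M.Cw w)) {S T : Finset F} (hTS : T ⊆ S)
    {y : F} (hy : y ∈ T) (hyr : y ∉ M.Cw w T) : y ∉ M.Cw w S := by
  intro h
  have h2 := hs S (T.erase y) y ((erase_subset _ _).trans hTS) h
  rw [insert_erase hy] at h2
  exact hyr h2

/-- A worker chosen from some menu is acceptable as a singleton. -/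
lemma accF_of_chosen {f : F} (hs : Substitutable (M.Cf f)) {S : Finset W} {x : W}
    (h : x ∈ M.Cf f S) : M.uF f ∅ < M.uF f {x} := by
  have h1 : x ∈ M.Cf f {x} := by
    have := hs S ∅ x (empty_subset S) h
    simpa using this
  have h2 : M.Cf f {x} = {x} :=
    subset_antisymm (M.Cf_subset f _) (singleton_subset_iff.mpr h1)
  rcases M.Cf_cand f {x} with h3 | h3
  · rwa [h2] at h3
  · rw [h2] at h3; simp at h3

lemma accW_of_chosen {w : W} (hs : Substitutable (M.Cw w)) {S : Finset F} {g : F}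
    (h : g ∈ M.Cw w S) : M.uW w ∅ < M.uW w {g} := by
  have h1 : g ∈ M.Cw w {g} := by
    have := hs S ∅ g (empty_subset S) h
    simpa using this
  have h2 : M.Cw w {g} = {g} :=
    subset_antisymm (M.Cw_subset w _) (singleton_subset_iff.mpr h1)
  rcases M.Cw_cand w {g} with h3 | h3
  · rwa [h2] at h3
  · rw [h2] at h3; simp at h3

/-! ### The reduced choice functions as filtered choice -/

lemma Cfred_eq (μ μt : Matching F W) (f : F) (S : Finset W) :
    M.Cfred μ μt f S = M.Cf f (S.filter (fun x => x ∉ M.Dall μ μt f)) := by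
  unfold Cfred
  apply bestIn_eq_of _ _ (M.injF f)
  · exact (M.Cf_subset f _).trans (filter_subset _ _)
  · rcases M.Cf_cand f (S.filter (fun x => x ∉ M.Dall μ μt f)) with h | h
    · left
      refine ⟨h, fun x hx => ?_⟩
      exact (mem_filter.mp (M.Cf_subset f _ hx)).2
    · right; exact h
  · intro T' hT' hc
    rcases hc with hc | hc
    · apply bestIn_le
      · intro x hx
        exact mem_filter.mpr ⟨hT' hx, hc.2 x hx⟩
      · left; exact hc.1
    · subst hc
      apply bestIn_le _ _ (empty_subset _)
      right; rfl

lemma Cwred_eq (μ μt : Matching F W) (w : W) (S : Finset F) :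
    M.Cwred μ μt w S = M.Cw w (S.filter (fun x => x ∉ M.Eall μ μt w)) := by
  unfold Cwred
  apply bestIn_eq_of _ _ (M.injW w)
  · exact (M.Cw_subset w _).trans (filter_subset _ _)
  · rcases M.Cw_cand w (S.filter (fun x => x ∉ M.Eall μ μt w)) with h | h
    · left
      refine ⟨h, fun x hx => ?_⟩
      exact (mem_filter.mp (M.Cw_subset w _ hx)).2
    · right; exact h
  · intro T' hT' hc
    rcases hc with hc | hc
    · apply bestIn_le
      · intro x hx
        exact mem_filter.mpr ⟨hT' hx, hc.2 x hx⟩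
      · left; exact hc.1
    · subst hc
      apply bestIn_le _ _ (empty_subset _)
      right; rfl

lemma Cfred_subset (μ μt : Matching F W) (f : F) (S : Finset W) :
    M.Cfred μ μt f S ⊆ S := bestIn_subset _ _ _

lemma Cwred_subset (μ μt : Matching F W) (w : W) (S : Finset F) :
    M.Cwred μ μt w S ⊆ S := bestIn_subset _ _ _

lemma Cfred_warp {μ μt : Matching F W} {f : F} {S T : Finset W}
    (h1 : M.Cfred μ μt f S ⊆ T) (h2 : T ⊆ S) :
    M.Cfred μ μt f T = M.Cfred μ μt f S := bestIn_warp _ _ (M.injF f) h1 h2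

lemma Cwred_warp {μ μt : Matching F W} {w : W} {S T : Finset F}
    (h1 : M.Cwred μ μt w S ⊆ T) (h2 : T ⊆ S) :
    M.Cwred μ μt w T = M.Cwred μ μt w S := bestIn_warp _ _ (M.injW w) h1 h2

lemma Cfred_subst {μ μt : Matching F W} {f : F} (hs : Substitutable (M.Cf f))
    {S S' : Finset W} {b : W} (h : b ∈ M.Cfred μ μt f S) (hss : S' ⊆ S) :
    b ∈ M.Cfred μ μt f (insert b S') := by
  rw [Cfred_eq] at h ⊢
  have hb : b ∉ M.Dall μ μt f := (mem_filter.mp (M.Cf_subset f _ h)).2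
  rw [filter_insert, if_pos hb]
  exact hs _ _ b (filter_subset_filter _ hss) h

lemma Cwred_subst {μ μt : Matching F W} {w : W} (hs : Substitutable (M.Cw w))
    {S S' : Finset F} {b : F} (h : b ∈ M.Cwred μ μt w S) (hss : S' ⊆ S) :
    b ∈ M.Cwred μ μt w (insert b S') := by
  rw [Cwred_eq] at h ⊢
  have hb : b ∉ M.Eall μ μt w := (mem_filter.mp (M.Cw_subset w _ h)).2
  rw [filter_insert, if_pos hb]
  exact hs _ _ b (filter_subset_filter _ hss) h

end Market

namespace Market

variable {F W : Type*} [DecidableEq F] [DecidableEq W] (M : Market F W)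

/-- Polarization of interests: `μ ⪰_F μ̃` implies `μ̃ ⪰_W μ` (substitutability only). -/
lemma geW_rev {μ μt : Matching F W} (hsub : M.SubstAll)
    (hμt : M.Stable μt) (hge : M.geF μ μt) :
    ∀ w, M.Cw w (μt.wm w ∪ μ.wm w) = μt.wm w := by
  intro w
  have hlam : M.Cw w (μt.wm w ∪ μ.wm w) ⊆ μt.wm w := by
    intro f hf
    by_contra hfn
    have hfS : f ∈ μt.wm w ∪ μ.wm w := M.Cw_subset w _ hf
    have hfμ : f ∈ μ.wm w := (mem_union.mp hfS).resolve_left hfn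
    have hwf : w ∈ μ.fm f := (μ.consistent f w).mpr hfμ
    have hwt : w ∉ μt.fm f := fun h => hfn ((μt.consistent f w).mp h)
    have hgef : M.Cf f (μ.fm f ∪ μt.fm f) = μ.fm f := hge f
    have h1 : w ∈ M.Cf f (μ.fm f ∪ μt.fm f) := by rw [hgef]; exact hwf
    have h2 : w ∈ M.Cf f (insert w (μt.fm f)) :=
      hsub.1 f _ _ w subset_union_right h1
    have h3 : f ∈ M.Cw w (insert f (μt.wm w)) :=
      hsub.2 w _ _ f subset_union_left hf
    exact hμt.2 f w ⟨hwt, h2, h3⟩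
  have h4 := M.Cw_warp hlam subset_union_left
  rw [hμt.1.2 w] at h4
  exact h4.symm

/-- No worker matched to `f` under `μ` is deleted from `f`'s list. -/
lemma mu_fm_survives {μ μt : Matching F W} (hsub : M.SubstAll)
    (hμ : M.Stable μ) (hμt : M.Stable μt) (hge : M.geF μ μt) (f : F) :
    ∀ x ∈ μ.fm f, x ∉ M.Dall μ μt f := by
  intro x hx hdel
  rcases hdel with (h1 | h2) | h3
  · -- Step 1(a) deletions never touch μ(f)
    obtain ⟨W', _, _, hxA⟩ := h1
    exact hxA hx
  · -- Step 2(a) deletions never touch μ(f)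
    obtain ⟨W', ⟨hC, _⟩, hxW, hxB⟩ := h2
    have hgef : M.Cf f (μ.fm f ∪ μt.fm f) = μ.fm f := hge f
    set S := μ.fm f ∪ (μt.fm f ∪ W') with hS
    have hrej : ∀ y ∈ W', y ∉ μt.fm f → y ∉ M.Cf f S := by
      intro y hyW hyB
      refine M.Cf_reject (hsub.1 f) subset_union_right (mem_union_right _ hyW) ?_
      rw [hC]; exact hyB
    have hsubAB : M.Cf f S ⊆ μ.fm f ∪ μt.fm f := by
      intro z hz
      have hzS := M.Cf_subset f S hz
      rcases mem_union.mp hzS with h | h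
      · exact mem_union_left _ h
      · rcases mem_union.mp h with h' | h'
        · exact mem_union_right _ h'
        · by_cases hzt : z ∈ μt.fm f
          · exact mem_union_right _ hzt
          · exact absurd hz (hrej z h' hzt)
    have hwarp : M.Cf f (μ.fm f ∪ μt.fm f) = M.Cf f S :=
      M.Cf_warp hsubAB (union_subset (subset_union_left)
        ((subset_union_left).trans subset_union_right))
    have hCS : M.Cf f S = μ.fm f := by rw [← hwarp, hgef]
    have hxin : x ∈ M.Cf f S := by rw [hCS]; exact hx
    exact hrej x hxW hxB hxin
  · -- Step 3 deletions never touch μ(f)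
    rcases h3 with hna | hE
    · have hfx : f ∈ μ.wm x := (μ.consistent f x).mp hx
      have h1 : f ∈ M.Cw x (μ.wm x) := by rw [hμ.1.2 x]; exact hfx
      exact hna (M.accW_of_chosen (hsub.2 x) h1)
    · rcases hE with hE1 | hE2
      · obtain ⟨F', ⟨hC, _⟩, hfF, hfb⟩ := hE1
        have hxb : x ∉ μt.fm f := fun h => hfb ((μt.consistent f x).mp h)
        have hgef : M.Cf f (μ.fm f ∪ μt.fm f) = μ.fm f := hge f
        have h1 : x ∈ M.Cf f (μ.fm f ∪ μt.fm f) := by rw [hgef]; exact hx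
        have h2 : x ∈ M.Cf f (insert x (μt.fm f)) :=
          hsub.1 f _ _ x subset_union_right h1
        have h3 : f ∈ M.Cw x (F' ∪ μt.wm x) := by rw [hC]; exact hfF
        have h4 : f ∈ M.Cw x (insert f (μt.wm x)) :=
          hsub.2 x _ _ f subset_union_right h3
        exact hμt.2 f x ⟨hxb, h2, h4⟩
      · obtain ⟨F', _, _, hfa⟩ := hE2
        exact hfa ((μ.consistent f x).mp hx)

/-- No firm matched to `w` under `μ̃` is deleted from `w`'s list. -/
lemma mut_wm_survives {μ μt : Matching F W} (hsub : M.SubstAll)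
    (hμ : M.Stable μ) (hμt : M.Stable μt) (hge : M.geF μ μt) (w : W) :
    ∀ g ∈ μt.wm w, g ∉ M.Eall μ μt w := by
  have hgeW := M.geW_rev hsub hμt hge
  intro g hg hdel
  rcases hdel with (h1 | h2) | h3
  · obtain ⟨F', _, _, hga⟩ := h1
    exact hga hg
  · obtain ⟨F', ⟨hC, _⟩, hgF, hga⟩ := h2
    set S := μt.wm w ∪ (μ.wm w ∪ F') with hS
    have hrej : ∀ y ∈ F', y ∉ μ.wm w → y ∉ M.Cw w S := by
      intro y hyF hya
      refine M.Cw_reject (hsub.2 w) subset_union_right (mem_union_right _ hyF) ?_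
      rw [hC]; exact hya
    have hsubAB : M.Cw w S ⊆ μt.wm w ∪ μ.wm w := by
      intro z hz
      have hzS := M.Cw_subset w S hz
      rcases mem_union.mp hzS with h | h
      · exact mem_union_left _ h
      · rcases mem_union.mp h with h' | h'
        · exact mem_union_right _ h'
        · by_cases hza : z ∈ μ.wm w
          · exact mem_union_right _ hza
          · exact absurd hz (hrej z h' hza)
    have hwarp : M.Cw w (μt.wm w ∪ μ.wm w) = M.Cw w S :=
      M.Cw_warp hsubAB (union_subset (subset_union_left)
        ((subset_union_left).trans subset_union_right))
    have hCS : M.Cw w S = μt.wm w := by rw [← hwarp, hgeW w]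
    have hgin : g ∈ M.Cw w S := by rw [hCS]; exact hg
    exact hrej g hgF hga hgin
  · rcases h3 with hna | hD
    · have hwg : w ∈ μt.fm g := (μt.consistent g w).mpr hg
      have h1 : w ∈ M.Cf g (μt.fm g) := by rw [hμt.1.1 g]; exact hwg
      exact hna (M.accF_of_chosen (hsub.1 g) h1)
    · rcases hD with hD1 | hD2
      · obtain ⟨W', ⟨hC, _⟩, hwW, hwa⟩ := hD1
        have hga' : g ∉ μ.wm w := fun h => hwa ((μ.consistent g w).mpr h)
        have h1 : w ∈ M.Cf g (W' ∪ μ.fm g) := by rw [hC]; exact hwW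
        have h2 : w ∈ M.Cf g (insert w (μ.fm g)) :=
          hsub.1 g _ _ w subset_union_right h1
        have h3 : g ∈ M.Cw w (μt.wm w ∪ μ.wm w) := by rw [hgeW w]; exact hg
        have h4 : g ∈ M.Cw w (insert g (μ.wm w)) :=
          hsub.2 w _ _ g subset_union_right h3
        exact hμ.2 g w ⟨hwa, h2, h4⟩
      · obtain ⟨W', _, _, hwa⟩ := hD2
        exact hwa ((μt.consistent g w).mpr hg)

/-- Survivors of Step 1(a) cannot improve upon `μ(f)` in the Blair order. -/
lemma Cf_union_survivors {f₀ : F} {μ : Matching F W} (hIR : M.Cf f₀ (μ.fm f₀) = μ.fm f₀)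
    {T : Finset W} (hT : ∀ x ∈ T, x ∉ M.D1 μ f₀) :
    M.Cf f₀ (μ.fm f₀ ∪ T) = μ.fm f₀ := by
  set R := M.Cf f₀ (μ.fm f₀ ∪ T) with hR
  by_cases hss : R ⊆ μ.fm f₀
  · have h1 := M.Cf_warp (show M.Cf f₀ (μ.fm f₀ ∪ T) ⊆ μ.fm f₀ from hss) subset_union_left
    rw [hIR] at h1
    exact h1.symm
  · obtain ⟨x, hxR, hxA⟩ := not_subset.mp hss
    have hxT : x ∈ T := (mem_union.mp (M.Cf_subset f₀ _ hxR)).resolve_left hxA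
    exfalso
    apply hT x hxT
    refine ⟨R, ⟨?_, ?_⟩, hxR, hxA⟩
    · exact M.Cf_warp subset_union_left
        (union_subset (M.Cf_subset f₀ _) subset_union_left)
    · intro h
      rw [h] at hxR
      exact hxA hxR

/-- Survivors of Step 1(b) cannot improve upon `μ̃(w)` in the Blair order. -/
lemma Cw_union_survivors {w₀ : W} {μt : Matching F W} (hIR : M.Cw w₀ (μt.wm w₀) = μt.wm w₀)
    {T : Finset F} (hT : ∀ g ∈ T, g ∉ M.E1 μt w₀) :
    M.Cw w₀ (μt.wm w₀ ∪ T) = μt.wm w₀ := by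
  set R := M.Cw w₀ (μt.wm w₀ ∪ T) with hR
  by_cases hss : R ⊆ μt.wm w₀
  · have h1 := M.Cw_warp (show M.Cw w₀ (μt.wm w₀ ∪ T) ⊆ μt.wm w₀ from hss) subset_union_left
    rw [hIR] at h1
    exact h1.symm
  · obtain ⟨g, hgR, hgA⟩ := not_subset.mp hss
    have hgT : g ∈ T := (mem_union.mp (M.Cw_subset w₀ _ hgR)).resolve_left hgA
    exfalso
    apply hT g hgT
    refine ⟨R, ⟨?_, ?_⟩, hgR, hgA⟩
    · exact M.Cw_warp subset_union_left
        (union_subset (M.Cw_subset w₀ _) subset_union_left)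
    · intro h
      rw [h] at hgR
      exact hgA hgR

/-- `μ` is firm-optimal with respect to the reduced profile, against any matching. -/
lemma red_top {μ μt : Matching F W} (hsub : M.SubstAll)
    (hμ : M.Stable μ) (hμt : M.Stable μt) (hge : M.geF μ μt) (f : F) (T : Finset W) :
    M.Cfred μ μt f (μ.fm f ∪ T) = μ.fm f := by
  rw [Cfred_eq, filter_union]
  have h1 : (μ.fm f).filter (fun x => x ∉ M.Dall μ μt f) = μ.fm f :=
    filter_eq_self.mpr (M.mu_fm_survives hsub hμ hμt hge f)
  rw [h1]
  apply M.Cf_union_survivors (hμ.1.1 f)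
  intro x hx hD1
  exact (mem_filter.mp hx).2 (Or.inl (Or.inl hD1))

/-- `μ̃` is worker-optimal with respect to the reduced profile, against any matching. -/
lemma red_topW {μ μt : Matching F W} (hsub : M.SubstAll)
    (hμ : M.Stable μ) (hμt : M.Stable μt) (hge : M.geF μ μt) (w : W) (T : Finset F) :
    M.Cwred μ μt w (μt.wm w ∪ T) = μt.wm w := by
  rw [Cwred_eq, filter_union]
  have h1 : (μt.wm w).filter (fun x => x ∉ M.Eall μ μt w) = μt.wm w :=
    filter_eq_self.mpr (M.mut_wm_survives hsub hμ hμt hge w)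
  rw [h1]
  apply M.Cw_union_survivors (hμt.1.2 w)
  intro g hg hE1
  exact (mem_filter.mp hg).2 (Or.inl (Or.inl hE1))

end Market


/-- Remark 1 (ii). With substitutable preferences satisfying the law of
aggregate demand and stable matchings `μ ⪰_F μ̃`, `μ` is the firm-optimal and `μ̃` the
worker-optimal stable matching under `P^{μ,μ̃}`, and `μ̃` is the firm-pessimal and `μ`
the worker-pessimal stable matching under `P^{μ,μ̃}`: for every `μ' ∈ S(P^{μ,μ̃})`,
`μ ⪰'_F μ' ⪰'_F μ̃` and `μ̃ ⪰'_W μ' ⪰'_W μ` in the reduced Blair orders. -/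
theorem reduced_optimal_pessimal {F W : Type*} [DecidableEq F] [DecidableEq W]
    (M : Market F W) (hsub : M.SubstAll) (hlad : M.LADAll)
    (μ μt : Matching F W) (hμ : M.Stable μ) (hμt : M.Stable μt) (hge : M.geF μ μt) :
    ∀ μ' : Matching F W, M.Stablered μ μt μ' →
      M.geFred μ μt μ μ' ∧ M.geFred μ μt μ' μt ∧
        M.geWred μ μt μt μ' ∧ M.geWred μ μt μ' μ := by
  intro μ' hst'
  -- (1) μ is firm-optimal under the reduced profile
  have h1 : M.geFred μ μt μ μ' := fun f => M.red_top hsub hμ hμt hge f (μ'.fm f)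
  -- (3) μ̃ is worker-optimal under the reduced profile
  have h3 : M.geWred μ μt μt μ' := fun w => M.red_topW hsub hμ hμt hge w (μ'.wm w)
  -- (2) μ̃ is firm-pessimal under the reduced profile
  have h2 : M.geFred μ μt μ' μt := by
    intro f
    by_contra hne
    set R := M.Cfred μ μt f (μ'.fm f ∪ μt.fm f) with hR
    have hRsub : ¬ R ⊆ μ'.fm f := by
      intro hs
      have hw := M.Cfred_warp (show M.Cfred μ μt f (μ'.fm f ∪ μt.fm f) ⊆ μ'.fm f from hs)
        subset_union_left
      rw [hst'.1.1 f] at hw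
      exact hne hw.symm
    obtain ⟨x, hxR, hxn⟩ := not_subset.mp hRsub
    have hxt : x ∈ μt.fm f :=
      (mem_union.mp (M.Cfred_subset μ μt f _ hxR)).resolve_left hxn
    have hb1 : x ∈ M.Cfred μ μt f (insert x (μ'.fm f)) :=
      M.Cfred_subst (hsub.1 f) hxR subset_union_left
    have hft : f ∈ μt.wm x := (μt.consistent f x).mp hxt
    have hb2 : f ∈ M.Cwred μ μt x (insert f (μ'.wm x)) := by
      have hmem : f ∈ M.Cwred μ μt x (μt.wm x ∪ μ'.wm x) := by rw [h3 x]; exact hft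
      exact M.Cwred_subst (hsub.2 x) hmem subset_union_right
    exact hst'.2 f x ⟨hxn, hb1, hb2⟩
  -- (4) μ is worker-pessimal under the reduced profile
  have h4 : M.geWred μ μt μ' μ := by
    intro w
    by_contra hne
    set R := M.Cwred μ μt w (μ'.wm w ∪ μ.wm w) with hR
    have hRsub : ¬ R ⊆ μ'.wm w := by
      intro hs
      have hw := M.Cwred_warp (show M.Cwred μ μt w (μ'.wm w ∪ μ.wm w) ⊆ μ'.wm w from hs)
        subset_union_left
      rw [hst'.1.2 w] at hw
      exact hne hw.symm
    obtain ⟨g, hgR, hgn⟩ := not_subset.mp hRsub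
    have hgm : g ∈ μ.wm w :=
      (mem_union.mp (M.Cwred_subset μ μt w _ hgR)).resolve_left hgn
    have hb2 : g ∈ M.Cwred μ μt w (insert g (μ'.wm w)) :=
      M.Cwred_subst (hsub.2 w) hgR subset_union_left
    have hwg : w ∈ μ.fm g := (μ.consistent g w).mpr hgm
    have hwn : w ∉ μ'.fm g := fun h => hgn ((μ'.consistent g w).mp h)
    have hb1 : w ∈ M.Cfred μ μt g (insert w (μ'.fm g)) := by
      have hmem : w ∈ M.Cfred μ μt g (μ.fm g ∪ μ'.fm g) := by rw [h1 g]; exact hwg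
      exact M.Cfred_subst (hsub.1 g) hmem subset_union_right
    exact hst'.2 g w ⟨hwn, hb1, hb2⟩
  exact ⟨h1, h2, h3, h4⟩
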